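/- For a simplicial complex X on [n], b ∈ {0,1}^n, and a vertex v not in the support of b, there is a long exact sequence ... → H̃_i(X_b; k) → H̃_i(X_{b+v}; k) → H̃_{i-1}(lk(v, X_{b+v}); k) → H̃_{i-1}(X_b; k) → ..., where the connecting maps come from the pair (X_{b+v}, X_b). -/

import Mathlib

open Finset
open scoped Classical

/-- A (finite abstract) simplicial complex on vertex set `[n]`, modeled as a
set of finsets of `Fin n`. -/
abbrev SComplex (n : ℕ) := Set (Finset (Fin n))

/-- `X` is a simplicial complex: closed under taking subsets. -/
def IsSComplex {n : ℕ} (X : SComplex n) : Prop := ∀ F ∈ X, ∀ G ⊆ F, G ∈ X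

/-- Alexander dual complex `X^∨ = {F | Fᶜ ∉ X}`. -/
def dualC {n : ℕ} (X : SComplex n) : SComplex n := {F | Fᶜ ∉ X}

/-- Link of a face `F` in `X`. -/
def linkC {n : ℕ} (F : Finset (Fin n)) (X : SComplex n) : SComplex n :=
  {G | F ∪ G ∈ X ∧ F ∩ G = ∅}

/-- Star of a face `F` in `X`. -/
def starC {n : ℕ} (F : Finset (Fin n)) (X : SComplex n) : SComplex n :=
  {G | F ∪ G ∈ X}

/-- Full subcomplex of `X` on the vertex set `b`. -/
def restC {n : ℕ} (X : SComplex n) (b : Finset (Fin n)) : SComplex n :=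
  {F | F ∈ X ∧ F ⊆ b}

/-- Faces of `X` of cardinality `m` (so of dimension `m - 1`). -/
def Faces {n : ℕ} (X : SComplex n) (m : ℤ) : Type :=
  {F : Finset (Fin n) // F ∈ X ∧ (F.card : ℤ) = m}

instance {n : ℕ} (X : SComplex n) (m : ℤ) : Finite (Faces X m) :=
  Subtype.finite

/-- The simplicial boundary map on (reduced, oriented) chains with coefficients in `R`:
from chains in simplicial dimension `d` (faces of cardinality `d+1`) to chains in
dimension `d-1`.  `(∂ f) G = ∑_v ± f (insert v G)`. -/
noncomputable def chainBd (R : Type) [CommRing R] {n : ℕ} (X : SComplex n) (d : ℤ) :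
    (Faces X (d + 1) → R) →ₗ[R] (Faces X d → R) where
  toFun f G := ∑ v : Fin n,
    if h : v ∉ G.1 ∧ insert v G.1 ∈ X then
      ((-1 : R) ^ (G.1.filter (· < v)).card) *
        f ⟨insert v G.1, h.2, by
          have := G.2.2
          rw [Finset.card_insert_of_notMem h.1]
          push_cast
          omega⟩
    else 0
  map_add' f g := by
    funext G
    rw [Pi.add_apply, ← Finset.sum_add_distrib]
    refine Finset.sum_congr rfl fun v _ => ?_
    split_ifs with h
    · exact mul_add _ _ _
    · simp
  map_smul' c f := by
    funext G
    rw [Pi.smul_apply, smul_eq_mul, Finset.mul_sum]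
    apply Finset.sum_congr rfl
    intro v _
    split_ifs with h
    · exact mul_left_comm ((-1 : R) ^ _) c _
    · simp

/-- The reduced simplicial homology of `X` in dimension `d`, with coefficients in `R`,
as a module: cycles modulo boundaries. -/
noncomputable def hredMod (R : Type) [CommRing R] {n : ℕ} (X : SComplex n) (d : ℤ) :=
  LinearMap.ker (chainBd R X d) ⧸
    Submodule.comap (LinearMap.ker (chainBd R X d)).subtype
      (LinearMap.range (chainBd R X (d + 1)))

/-- The dimension of the reduced simplicial homology `H̃_d(X; k)` over a field `k`
(computed as `dim ker ∂_d - dim im ∂_{d+1}`). -/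
noncomputable def hred (k : Type) [Field k] {n : ℕ} (X : SComplex n) (d : ℤ) : ℕ :=
  Module.finrank k (LinearMap.ker (chainBd k X d)) -
    Module.finrank k (LinearMap.range (chainBd k X (d + 1)))

noncomputable instance (R : Type) [CommRing R] {n : ℕ} (X : SComplex n) (d : ℤ) :
    AddCommGroup (hredMod R X d) := by unfold hredMod; infer_instance

noncomputable instance (R : Type) [CommRing R] {n : ℕ} (X : SComplex n) (d : ℤ) :
    Module R (hredMod R X d) := by unfold hredMod; infer_instance


-- ============ development ============
namespace LesAux
variable {n : ℕ} (k : Type) [Field k]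

lemma chainBd_apply (Y : SComplex n) (d : ℤ) (f : Faces Y (d+1) → k) (G : Faces Y d) :
    chainBd k Y d f G = ∑ v : Fin n,
    if h : v ∉ G.1 ∧ insert v G.1 ∈ Y then
      ((-1 : k) ^ (G.1.filter (· < v)).card) *
        f ⟨insert v G.1, h.2, by
          have := G.2.2
          rw [Finset.card_insert_of_notMem h.1]; push_cast; omega⟩
    else 0 := rfl

/-- cast along an equality of integer indices -/
def fcast (Y : SComplex n) {m m' : ℤ} (h : m = m') : (Faces Y m → k) →ₗ[k] (Faces Y m' → k) where
  toFun f G := f ⟨G.1, G.2.1, by rw [h]; exact G.2.2⟩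
  map_add' f g := rfl
  map_smul' c f := rfl

lemma fcast_apply (Y : SComplex n) {m m' : ℤ} (h : m = m') (f : Faces Y m → k) (G : Faces Y m') :
    fcast k Y h f G = f ⟨G.1, G.2.1, by rw [h]; exact G.2.2⟩ := rfl

lemma fcast_fcast (Y : SComplex n) {m m' m'' : ℤ} (h : m = m') (h' : m' = m'')
    (f : Faces Y m → k) : fcast k Y h' (fcast k Y h f) = fcast k Y (h.trans h') f := rfl

lemma fcast_rfl (Y : SComplex n) {m : ℤ} (h : m = m) (f : Faces Y m → k) :
    fcast k Y h f = f := by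
  funext G; rw [fcast_apply]; congr 1

def fEquiv (Y : SComplex n) {m m' : ℤ} (h : m = m') : (Faces Y m → k) ≃ₗ[k] (Faces Y m' → k) :=
  LinearEquiv.ofLinear (fcast k Y h) (fcast k Y h.symm)
    (LinearMap.ext fun f => by rw [LinearMap.comp_apply, fcast_fcast, fcast_rfl, LinearMap.id_apply])
    (LinearMap.ext fun f => by rw [LinearMap.comp_apply, fcast_fcast, fcast_rfl, LinearMap.id_apply])

lemma filter_insert_card (G : Finset (Fin n)) (w u : Fin n) (hw : w ∉ G) :
    (((insert w G).filter (· < u)).card : ℤ) =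
      ((G.filter (· < u)).card : ℤ) + (if w < u then 1 else 0) := by
  rw [Finset.filter_insert]
  split_ifs with h
  · rw [Finset.card_insert_of_notMem (fun hc => hw (Finset.mem_of_mem_filter _ hc))]
    push_cast; ring
  · simp

lemma neg_one_pow_swap {w u : Fin n} (hne : w ≠ u) (G : Finset (Fin n))
    (hw : w ∉ G) (hu : u ∉ G) :
    ((-1 : k) ^ (G.filter (· < w)).card * (-1 : k) ^ ((insert w G).filter (· < u)).card)
    = -((-1 : k) ^ (G.filter (· < u)).card * (-1 : k) ^ ((insert u G).filter (· < w)).card) := by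
  have h1 := filter_insert_card (n := n) G w u hw
  have h2 := filter_insert_card (n := n) G u w hu
  rw [← pow_add, ← pow_add]
  rcases lt_or_gt_of_ne hne with hlt | hlt
  · rw [if_pos hlt] at h1
    rw [if_neg hlt.asymm] at h2
    have e1 : ((insert w G).filter (· < u)).card = (G.filter (· < u)).card + 1 := by omega
    have e2 : ((insert u G).filter (· < w)).card = (G.filter (· < w)).card := by omega
    rw [e1, e2]
    rw [show (G.filter (· < w)).card + ((G.filter (· < u)).card + 1)
        = ((G.filter (· < u)).card + (G.filter (· < w)).card) + 1 by omega]
    rw [pow_succ]; ring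
  · rw [if_neg hlt.asymm] at h1
    rw [if_pos hlt] at h2
    have e1 : ((insert w G).filter (· < u)).card = (G.filter (· < u)).card := by omega
    have e2 : ((insert u G).filter (· < w)).card = (G.filter (· < w)).card + 1 := by omega
    rw [e1, e2]
    rw [show (G.filter (· < u)).card + ((G.filter (· < w)).card + 1)
        = ((G.filter (· < w)).card + (G.filter (· < u)).card) + 1 by omega]
    rw [pow_succ]; ring

section BdBd

/-- pair condition for the double boundary -/
def bdCond (Y : SComplex n) (G : Finset (Fin n)) (p : Fin n × Fin n) : Prop :=
  (p.1 ∉ G ∧ insert p.1 G ∈ Y) ∧ p.2 ∉ insert p.1 G ∧ insert p.2 (insert p.1 G) ∈ Y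

lemma bdCond_swap (Y : SComplex n) (hY : IsSComplex Y) {G : Finset (Fin n)}
    {p : Fin n × Fin n} (h : bdCond Y G p) : bdCond Y G p.swap := by
  obtain ⟨⟨h1, h2⟩, h3, h4⟩ := h
  have hne : p.2 ≠ p.1 := fun e => h3 (by rw [e]; exact Finset.mem_insert_self _ _)
  have h2G : p.2 ∉ G := fun hc => h3 (Finset.mem_insert_of_mem hc)
  have hsub : insert p.2 G ⊆ insert p.2 (insert p.1 G) :=
    Finset.insert_subset_insert _ (Finset.subset_insert _ _)
  have hmem : insert p.2 G ∈ Y := hY _ h4 _ hsub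
  have hnm : p.1 ∉ insert p.2 G := by
    rw [Finset.mem_insert]
    rintro (e | e)
    · exact hne e.symm
    · exact h1 e
  have hcm : insert p.1 (insert p.2 G) ∈ Y := by
    rw [Finset.insert_comm]; exact h4
  exact ⟨⟨h2G, hmem⟩, hnm, hcm⟩

lemma bdCond_card {Y : SComplex n} {d : ℤ} (G : Faces Y d) {p : Fin n × Fin n}
    (h : bdCond Y G.1 p) : ((insert p.2 (insert p.1 G.1)).card : ℤ) = d + 1 + 1 := by
  obtain ⟨⟨h1, _⟩, h3, _⟩ := h
  rw [Finset.card_insert_of_notMem h3, Finset.card_insert_of_notMem h1]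
  have := G.2.2; push_cast; omega

noncomputable def bdT (Y : SComplex n) (d : ℤ) (f : Faces Y (d+1+1) → k) (G : Faces Y d)
    (p : Fin n × Fin n) : k :=
  if h : bdCond Y G.1 p then
    ((-1:k) ^ (G.1.filter (· < p.1)).card) *
      (((-1:k) ^ ((insert p.1 G.1).filter (· < p.2)).card) *
        f ⟨insert p.2 (insert p.1 G.1), h.2.2, bdCond_card G h⟩)
  else 0

lemma bd_bd (Y : SComplex n) (hY : IsSComplex Y) (d : ℤ) (f : Faces Y (d+1+1) → k)
    (G : Faces Y d) : chainBd k Y d (chainBd k Y (d+1) f) G = 0 := by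
  classical
  have hsum : chainBd k Y d (chainBd k Y (d+1) f) G = ∑ w : Fin n, ∑ u : Fin n, bdT k Y d f G (w, u) := by
    rw [chainBd_apply]
    refine Finset.sum_congr rfl fun w _ => ?_
    by_cases h : w ∉ G.1 ∧ insert w G.1 ∈ Y
    · rw [dif_pos h]; erw [chainBd_apply]; rw [Finset.mul_sum]
      refine Finset.sum_congr rfl fun u _ => ?_
      by_cases h' : u ∉ insert w G.1 ∧ insert u (insert w G.1) ∈ Y
      · have hc : bdCond Y G.1 (w, u) := ⟨h, h'⟩
        rw [dif_pos h', bdT, dif_pos hc]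
      · rw [dif_neg h', mul_zero, bdT, dif_neg (fun hc => h' hc.2)]
    · rw [dif_neg h]
      refine (Finset.sum_eq_zero fun u _ => ?_).symm
      rw [bdT, dif_neg (fun hc : bdCond Y G.1 (w, u) => h hc.1)]
  rw [hsum, ← Finset.sum_product']
  refine Finset.sum_ninvolution Prod.swap ?_ ?_ (fun _ => Finset.mem_univ _) Prod.swap_swap
  · rintro ⟨w, u⟩
    simp only [Prod.swap_prod_mk]
    by_cases h : bdCond Y G.1 (w, u)
    · have h' : bdCond Y G.1 (u, w) := bdCond_swap Y hY h
      rw [bdT, bdT, dif_pos h, dif_pos h']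
      have harg : (⟨insert (w, u).2 (insert (w, u).1 G.1), h.2.2, bdCond_card G h⟩ : Faces Y (d+1+1))
          = ⟨insert (u, w).2 (insert (u, w).1 G.1), h'.2.2, bdCond_card G h'⟩ :=
        Subtype.ext (Finset.insert_comm _ _ _)
      rw [harg, ← mul_assoc, ← mul_assoc]
      have hne : w ≠ u := fun e => h.2.1 (by rw [← e]; exact Finset.mem_insert_self _ _)
      have hkey := neg_one_pow_swap (k := k) hne G.1 h.1.1 h'.1.1
      rw [hkey]; ring
    · have h' : ¬ bdCond Y G.1 (u, w) := fun hc => by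
        have h2 := bdCond_swap Y hY hc
        simp only [Prod.swap_prod_mk] at h2
        exact h h2
      rw [bdT, bdT, dif_neg h, dif_neg h', add_zero]
  · rintro ⟨w, u⟩ hp he
    apply hp
    have h21 : u = w := congrArg Prod.fst he
    rw [bdT]
    refine dif_neg fun hc => hc.2.1 ?_
    show u ∈ insert w G.1
    rw [h21]; exact Finset.mem_insert_self _ _

end BdBd
lemma chainBd_fcast (Y : SComplex n) {m m' : ℤ} (h : m = m') (h1 : m + 1 = m' + 1)
    (f : Faces Y (m + 1) → k) :
    chainBd k Y m' (fcast k Y h1 f) = fcast k Y h (chainBd k Y m f) := by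
  subst h
  rw [fcast_rfl, fcast_rfl]

open CategoryTheory in
/-- The simplicial chain complex of `Y`, shifted so that degree `i` consists of
faces of cardinality `i + s`. -/
noncomputable def Cplx (Y : SComplex n) (hY : IsSComplex Y) (s : ℤ) :
    HomologicalComplex (ModuleCat k) (ComplexShape.down ℤ) where
  X i := ModuleCat.of k (Faces Y (i + s) → k)
  d i j :=
    if h : i = j + 1 then
      ModuleCat.ofHom (chainBd k Y (j + s) ∘ₗ fcast k Y (show i + s = (j + s) + 1 by omega))
    else 0
  shape i j hij := dif_neg (by have hij' : ¬ j + 1 = i := hij; omega)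
  d_comp_d' i j l hij hjl := by
    change j + 1 = i at hij; change l + 1 = j at hjl
    rw [dif_pos (by omega : i = j + 1), dif_pos (by omega : j = l + 1)]
    apply ModuleCat.hom_ext
    apply LinearMap.ext
    intro f
    show (chainBd k Y (l + s)) ((fcast k Y _) ((chainBd k Y (j + s)) ((fcast k Y _) f))) = 0
    rw [show ((fcast k Y (show j + s = (l + s) + 1 by omega)) ((chainBd k Y (j + s)) ((fcast k Y (show i + s = (j+s) + 1 by omega)) f)))
        = chainBd k Y (l + s + 1) (fcast k Y (show j + s + 1 = (l + s + 1) + 1 by omega) ((fcast k Y (show i + s = (j+s) + 1 by omega)) f))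
      from (chainBd_fcast k Y _ _ _).symm]
    funext G
    exact bd_bd k Y hY (l + s) _ G

lemma Cplx_d (Y : SComplex n) (hY : IsSComplex Y) (s : ℤ) (i j : ℤ) (h : i = j + 1) :
    (Cplx k Y hY s).d i j =
      ModuleCat.ofHom (chainBd k Y (j + s) ∘ₗ fcast k Y (show i + s = (j + s) + 1 by omega)) :=
  dif_pos h

open CategoryTheory in
noncomputable def homologyEquiv (Y : SComplex n) (hY : IsSComplex Y) (s i d : ℤ)
    (hd : d = i - 1 + s) :
    ((Cplx k Y hY s).homology i : Type) ≃ₗ[k] hredMod k Y d := by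
  subst hd
  have hprev : (ComplexShape.down ℤ).prev i = i + 1 :=
    ComplexShape.prev_eq' _ (by simp [ComplexShape.down])
  have hnext : (ComplexShape.down ℤ).next i = i - 1 :=
    ComplexShape.next_eq' _ (by simp [ComplexShape.down])
  have e1 : (Cplx k Y hY s).homology i ≅ ((Cplx k Y hY s).sc' (i+1) i (i-1)).homology :=
    HomologicalComplex.homologyIsoSc' _ (i+1) i (i-1) hprev hnext
  set S := (Cplx k Y hY s).sc' (i+1) i (i-1) with hS
  have e2 : S.homology ≅ S.moduleCatLeftHomologyData.H := S.moduleCatHomologyIso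
  set B := chainBd k Y (i - 1 + s) with hB
  set A := chainBd k Y (i - 1 + s + 1) with hA
  have hgm : i + s = (i - 1 + s) + 1 := by omega
  have hfm : i + 1 + s = (i + s) + 1 := by omega
  have h1 : (i + s) + 1 = (i - 1 + s + 1) + 1 := by omega
  have hg : S.g = ModuleCat.ofHom (B ∘ₗ fcast k Y hgm) := Cplx_d k Y hY s i (i-1) (by omega)
  have hf : S.f = ModuleCat.ofHom (chainBd k Y (i + s) ∘ₗ fcast k Y hfm) :=
    Cplx_d k Y hY s (i+1) i (by omega)
  have memto : ∀ x : LinearMap.ker S.g.hom, fcast k Y hgm x.1 ∈ LinearMap.ker B := by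
    intro x
    have hx : S.g x.1 = 0 := x.2
    have hgx : S.g x.1 = (B ∘ₗ fcast k Y hgm) x.1 := congrArg (fun φ : S.X₂ ⟶ S.X₃ => φ.hom x.1) hg
    rw [LinearMap.mem_ker]
    exact (hgx ▸ hx : (B ∘ₗ fcast k Y hgm) x.1 = 0)
  have meminv : ∀ z : LinearMap.ker B, fcast k Y hgm.symm z.1 ∈ LinearMap.ker S.g.hom := by
    intro z
    show S.g.hom (fcast k Y hgm.symm z.1) = 0
    have hgx : S.g (fcast k Y hgm.symm z.1) = (B ∘ₗ fcast k Y hgm) (fcast k Y hgm.symm z.1) :=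
      congrArg (fun φ : S.X₂ ⟶ S.X₃ => φ.hom _) hg
    refine hgx.trans ?_
    show B (fcast k Y hgm (fcast k Y hgm.symm z.1)) = 0
    rw [fcast_fcast, fcast_rfl]
    exact z.2
  set E : (LinearMap.ker S.g.hom) ≃ₗ[k] (LinearMap.ker B) :=
    { toFun := fun x => ⟨fcast k Y hgm x.1, memto x⟩
      invFun := fun z => ⟨fcast k Y hgm.symm z.1, meminv z⟩
      map_add' := fun x y => Subtype.ext (map_add _ _ _)
      map_smul' := fun c x => Subtype.ext (map_smul _ c _)
      left_inv := fun x => Subtype.ext (by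
        show fcast k Y hgm.symm (fcast k Y hgm x.1) = x.1
        exact (fcast_fcast k Y hgm hgm.symm x.1).trans (fcast_rfl k Y _ _))
      right_inv := fun z => Subtype.ext (by
        show fcast k Y hgm (fcast k Y hgm.symm z.1) = z.1
        rw [fcast_fcast, fcast_rfl]) } with hE
  have hmap : (LinearMap.range S.moduleCatToCycles).map (E : LinearMap.ker S.g.hom →ₗ[k] LinearMap.ker B)
      = Submodule.comap (LinearMap.ker B).subtype (LinearMap.range A) := by
    ext z
    simp only [Submodule.mem_map, LinearMap.mem_range, Submodule.mem_comap,
      Submodule.coe_subtype]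
    constructor
    · rintro ⟨y, ⟨w, rfl⟩, rfl⟩
      refine ⟨fcast k Y h1 (fcast k Y hfm w), ?_⟩
      show A (fcast k Y h1 (fcast k Y hfm w)) = fcast k Y hgm (S.f w)
      rw [hA, chainBd_fcast k Y hgm h1 (fcast k Y hfm w)]
      have hfx : S.f w = (chainBd k Y (i + s) ∘ₗ fcast k Y hfm) w := congrArg (fun φ : S.X₁ ⟶ S.X₂ => φ.hom w) hf
      rw [hfx]
      rfl
    · rintro ⟨u, hu⟩
      have hSfval : S.f (fcast k Y hfm.symm (fcast k Y h1.symm u)) = fcast k Y hgm.symm z.1 := by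
        have hfx : S.f (fcast k Y hfm.symm (fcast k Y h1.symm u))
            = (chainBd k Y (i + s) ∘ₗ fcast k Y hfm) (fcast k Y hfm.symm (fcast k Y h1.symm u)) :=
          congrArg (fun φ : S.X₁ ⟶ S.X₂ => φ.hom _) hf
        rw [hfx]
        show chainBd k Y (i+s) (fcast k Y hfm (fcast k Y hfm.symm (fcast k Y h1.symm u)))
          = fcast k Y hgm.symm z.1
        rw [fcast_fcast, fcast_rfl, ← hu, hA]
        rw [show chainBd k Y (i-1+s+1) u
            = chainBd k Y (i-1+s+1) (fcast k Y h1 (fcast k Y h1.symm u)) by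
          rw [fcast_fcast, fcast_rfl]]
        rw [chainBd_fcast k Y hgm h1, fcast_fcast, fcast_rfl]
      refine ⟨⟨fcast k Y hgm.symm z.1, meminv z⟩,
        ⟨fcast k Y hfm.symm (fcast k Y h1.symm u), Subtype.ext hSfval⟩, ?_⟩
      apply Subtype.ext
      show fcast k Y hgm (fcast k Y hgm.symm z.1) = z.1
      rw [fcast_fcast, fcast_rfl]
  exact e1.toLinearEquiv ≪≫ₗ e2.toLinearEquiv ≪≫ₗ Submodule.Quotient.equiv _ _ E hmap

section Pair
variable (X : SComplex n) (b : Finset (Fin n)) (v : Fin n)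

lemma isSComplex_restC (hX : IsSComplex X) (c : Finset (Fin n)) : IsSComplex (restC X c) :=
  fun F hF G hG => ⟨hX F hF.1 G hG, hG.trans hF.2⟩

lemma isSComplex_linkC (Y : SComplex n) (hY : IsSComplex Y) (F : Finset (Fin n)) :
    IsSComplex (linkC F Y) := by
  rintro G ⟨hG1, hG2⟩ H hH
  refine ⟨hY _ hG1 _ (Finset.union_subset_union_right hH), ?_⟩
  rw [Finset.eq_empty_iff_forall_notMem] at hG2 ⊢
  intro x hx
  rw [Finset.mem_inter] at hx
  exact hG2 x (Finset.mem_inter.2 ⟨hx.1, hH hx.2⟩)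

lemma Xb_subset : restC X b ⊆ restC X (insert v b) :=
  fun F hF => ⟨hF.1, hF.2.trans (Finset.subset_insert _ _)⟩

lemma mem_Xb_of_not_v {F : Finset (Fin n)} (hF : F ∈ restC X (insert v b)) (hvF : v ∉ F) :
    F ∈ restC X b := by
  refine ⟨hF.1, fun x hx => ?_⟩
  rcases Finset.mem_insert.1 (hF.2 hx) with e | e
  · exact absurd (e ▸ hx) hvF
  · exact e

lemma not_mem_Xb_of_v (hv : v ∉ b) {F : Finset (Fin n)} (hvF : v ∈ F) : F ∉ restC X b :=
  fun hF => hv (hF.2 hvF)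

/-- extension by zero of a chain on a subcomplex -/
noncomputable def extL (Y Y' : SComplex n) (hsub : Y ⊆ Y') (m : ℤ) :
    (Faces Y m → k) →ₗ[k] (Faces Y' m → k) where
  toFun f F := if h : F.1 ∈ Y then f ⟨F.1, h, F.2.2⟩ else 0
  map_add' f g := by
    funext F
    by_cases h : F.1 ∈ Y
    · simp only [Pi.add_apply, dif_pos h]; rfl
    · simp only [Pi.add_apply, dif_neg h, add_zero]
  map_smul' c f := by
    funext F
    by_cases h : F.1 ∈ Y
    · simp only [Pi.smul_apply, RingHom.id_apply, dif_pos h]; rfl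
    · simp only [Pi.smul_apply, RingHom.id_apply, dif_neg h, smul_zero]

lemma extL_pos (Y Y' : SComplex n) (hsub : Y ⊆ Y') (m : ℤ) (f : Faces Y m → k)
    (F : Faces Y' m) (h : F.1 ∈ Y) : extL k Y Y' hsub m f F = f ⟨F.1, h, F.2.2⟩ := dif_pos h

lemma extL_neg (Y Y' : SComplex n) (hsub : Y ⊆ Y') (m : ℤ) (f : Faces Y m → k)
    (F : Faces Y' m) (h : F.1 ∉ Y) : extL k Y Y' hsub m f F = 0 := dif_neg h

lemma extL_comm (hX : IsSComplex X) (m : ℤ)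
    (f : Faces (restC X b) (m+1) → k) (G : Faces (restC X (insert v b)) m) :
    chainBd k (restC X (insert v b)) m (extL k _ _ (Xb_subset X b v) (m+1) f) G =
      extL k _ _ (Xb_subset X b v) m (chainBd k (restC X b) m f) G := by
  classical
  by_cases hG : G.1 ∈ restC X b
  · rw [extL_pos k _ _ _ _ _ _ hG]
    erw [chainBd_apply, chainBd_apply]
    refine Finset.sum_congr rfl fun w _ => ?_
    by_cases hb : w ∉ G.1 ∧ insert w G.1 ∈ restC X b
    · rw [dif_pos hb, dif_pos (⟨hb.1, Xb_subset X b v hb.2⟩ :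
        w ∉ G.1 ∧ insert w G.1 ∈ restC X (insert v b))]
      erw [extL_pos k _ _ _ _ _ _ hb.2]
    · by_cases hv' : w ∉ G.1 ∧ insert w G.1 ∈ restC X (insert v b)
      · rw [dif_pos hv', dif_neg hb]
        erw [extL_neg k _ _ _ _ _ _ (show insert w G.1 ∉ restC X b from fun hc => hb ⟨hv'.1, hc⟩)]; rw [mul_zero]
      · rw [dif_neg hv', dif_neg hb]
  · rw [extL_neg k _ _ _ _ _ _ hG]
    rw [chainBd_apply]
    refine Finset.sum_eq_zero fun w _ => ?_
    by_cases hv' : w ∉ G.1 ∧ insert w G.1 ∈ restC X (insert v b)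
    · rw [dif_pos hv']
      have hnb : insert w G.1 ∉ restC X b := fun hc =>
        hG (isSComplex_restC X hX b _ hc _ (Finset.subset_insert _ _))
      erw [extL_neg k _ _ _ _ _ _ hnb]; rw [mul_zero]
    · rw [dif_neg hv']

lemma link_vnotmem {Y : SComplex n} {m' : ℤ} (G : Faces (linkC {v} Y) m') : v ∉ G.1 := by
  intro h
  have h2 := G.2.1.2
  have : v ∈ ({v} : Finset (Fin n)) ∩ G.1 :=
    Finset.mem_inter.2 ⟨Finset.mem_singleton_self v, h⟩
  rw [h2] at this
  exact Finset.notMem_empty v this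

lemma link_vmem {Y : SComplex n} {m' : ℤ} (G : Faces (linkC {v} Y) m') : insert v G.1 ∈ Y := by
  have := G.2.1.1
  rw [Finset.insert_eq]
  exact this

lemma link_card {Y : SComplex n} {m m' : ℤ} (hm : m = m' + 1) (G : Faces (linkC {v} Y) m') :
    ((insert v G.1).card : ℤ) = m := by
  rw [Finset.card_insert_of_notMem (link_vnotmem v G)]
  have := G.2.2
  push_cast
  omega

/-- the (sign-twisted) restriction map to the link of `v` -/
noncomputable def sigmaL (Y : SComplex n) (m m' : ℤ) (hm : m = m' + 1) :
    (Faces Y m → k) →ₗ[k] (Faces (linkC {v} Y) m' → k) where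
  toFun f G := (-1:k)^(G.1.card + (G.1.filter (· < v)).card) *
    f ⟨insert v G.1, link_vmem v G, link_card v hm G⟩
  map_add' f g := by
    funext G
    simp only [Pi.add_apply]
    exact mul_add _ _ _
  map_smul' c f := by
    funext G
    simp only [Pi.smul_apply, RingHom.id_apply, smul_eq_mul]
    exact mul_left_comm _ _ _

lemma sigmaL_apply (Y : SComplex n) (m m' : ℤ) (hm : m = m' + 1) (f : Faces Y m → k)
    (G : Faces (linkC {v} Y) m') :
    sigmaL k v Y m m' hm f G = (-1:k)^(G.1.card + (G.1.filter (· < v)).card) *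
      f ⟨insert v G.1, link_vmem v G, link_card v hm G⟩ := rfl

lemma sigma_cond_iff (Y : SComplex n) {m' : ℤ} (G : Faces (linkC {v} Y) m') (w : Fin n) :
    (w ∉ G.1 ∧ insert w G.1 ∈ linkC {v} Y) ↔
      (w ∉ insert v G.1 ∧ insert w (insert v G.1) ∈ Y) := by
  constructor
  · rintro ⟨hw, hm, hint⟩
    have hwv : w ≠ v := by
      intro e
      subst e
      have : w ∈ ({w} : Finset (Fin n)) ∩ insert w G.1 :=
        Finset.mem_inter.2 ⟨Finset.mem_singleton_self w, Finset.mem_insert_self w _⟩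
      rw [hint] at this
      exact Finset.notMem_empty w this
    refine ⟨?_, ?_⟩
    · rw [Finset.mem_insert]
      rintro (e | e)
      · exact hwv e
      · exact hw e
    · rw [Finset.insert_comm, Finset.insert_eq v]
      exact hm
  · rintro ⟨hw, hm⟩
    have hwv : w ≠ v := fun e => hw (by rw [e]; exact Finset.mem_insert_self _ _)
    have hwG : w ∉ G.1 := fun hc => hw (Finset.mem_insert_of_mem hc)
    refine ⟨hwG, ?_, ?_⟩
    · rw [← Finset.insert_eq, Finset.insert_comm]
      exact hm
    · refine Finset.singleton_inter_of_notMem ?_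
      rw [Finset.mem_insert]
      rintro (e | e)
      · exact hwv e.symm
      · exact link_vnotmem v G e

lemma sigma_sign (G : Finset (Fin n)) (w : Fin n) (hw : w ∉ G) (hvG : v ∉ G) (hne : w ≠ v) :
    ((-1:k)^((G.filter (· < w)).card)) *
      ((-1:k)^((insert w G).card + ((insert w G).filter (· < v)).card))
    = ((-1:k)^(G.card + (G.filter (· < v)).card)) *
      ((-1:k)^(((insert v G).filter (· < w)).card)) := by
  rw [Finset.card_insert_of_notMem hw, ← pow_add, ← pow_add]
  have h1 := filter_insert_card (n := n) G w v hw
  have h2 := filter_insert_card (n := n) G v w hvG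
  rcases lt_or_gt_of_ne hne with hlt | hlt
  · rw [if_pos hlt] at h1
    rw [if_neg hlt.asymm] at h2
    have e1 : ((insert w G).filter (· < v)).card = (G.filter (· < v)).card + 1 := by omega
    have e2 : ((insert v G).filter (· < w)).card = (G.filter (· < w)).card := by omega
    rw [e1, e2]
    rw [show (G.filter (· < w)).card + (G.card + 1 + ((G.filter (· < v)).card + 1))
        = (G.card + (G.filter (· < v)).card + (G.filter (· < w)).card) + 2 by ring]
    rw [pow_add]
    norm_num
  · rw [if_neg hlt.asymm] at h1
    rw [if_pos hlt] at h2
    have e1 : ((insert w G).filter (· < v)).card = (G.filter (· < v)).card := by omega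
    have e2 : ((insert v G).filter (· < w)).card = (G.filter (· < w)).card + 1 := by omega
    rw [e1, e2]
    rw [show (G.filter (· < w)).card + (G.card + 1 + (G.filter (· < v)).card)
        = G.card + (G.filter (· < v)).card + ((G.filter (· < w)).card + 1) by ring]

lemma sigma_comm (Y : SComplex n) (m : ℤ) (p1 : m + 1 + 0 = (m + 0) + 1)
    (p2 : m + 1 + 1 = (m + 1 + 0) + 1) (p3 : m + 1 = (m + 0) + 1)
    (p4 : m + 1 + 1 = (m + 1) + 1)
    (f : Faces Y (m + 1 + 1) → k) (G : Faces (linkC {v} Y) (m + 0)) :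
    chainBd k (linkC {v} Y) (m + 0) (fcast k _ p1 (sigmaL k v Y (m+1+1) (m+1+0) p2 f)) G
      = sigmaL k v Y (m+1) (m+0) p3 (chainBd k Y (m+1) (fcast k Y p4 f)) G := by
  classical
  erw [sigmaL_apply, chainBd_apply, chainBd_apply]; rw [Finset.mul_sum]
  refine Finset.sum_congr rfl fun w _ => ?_
  by_cases hc : w ∉ G.1 ∧ insert w G.1 ∈ linkC {v} Y
  · have hc' := (sigma_cond_iff v Y G w).1 hc
    rw [dif_pos hc, dif_pos hc']
    erw [fcast_apply, sigmaL_apply, fcast_apply]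
    have hvG : v ∉ G.1 := link_vnotmem v G
    have hwv : w ≠ v := fun e => hc'.1 (by rw [e]; exact Finset.mem_insert_self _ _)
    have hvins : v ∉ insert w G.1 := by
      rw [Finset.mem_insert]
      rintro (e | e)
      · exact hwv e.symm
      · exact hvG e
    have hmem : insert v (insert w G.1) ∈ Y := by
      rw [Finset.insert_comm]; exact hc'.2
    have hcard : ((insert v (insert w G.1)).card : ℤ) = m + 1 + 1 := by
      rw [Finset.card_insert_of_notMem hvins, Finset.card_insert_of_notMem hc.1]
      have := G.2.2; push_cast; omega
    have hmem2 : insert w (insert v G.1) ∈ Y := hc'.2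
    have hcard2 : ((insert w (insert v G.1)).card : ℤ) = m + 1 + 1 := by
      rw [Finset.card_insert_of_notMem hc'.1, Finset.card_insert_of_notMem hvG]
      have := G.2.2; push_cast; omega
    show (-1:k) ^ (G.1.filter (· < w)).card *
        ((-1:k) ^ ((insert w G.1).card + ((insert w G.1).filter (· < v)).card) *
          f ⟨insert v (insert w G.1), hmem, hcard⟩)
      = (-1:k) ^ (G.1.card + (G.1.filter (· < v)).card) *
        ((-1:k) ^ (((insert v G.1).filter (· < w)).card) *
          f ⟨insert w (insert v G.1), hmem2, hcard2⟩)
    rw [show (⟨insert v (insert w G.1), hmem, hcard⟩ : Faces Y (m+1+1))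
        = ⟨insert w (insert v G.1), hmem2, hcard2⟩ from Subtype.ext (Finset.insert_comm _ _ _)]
    have hs := sigma_sign (k := k) (v := v) G.1 w hc.1 hvG hwv
    linear_combination hs * (f ⟨insert w (insert v G.1), hmem2, hcard2⟩)
  · have hc' := (sigma_cond_iff v Y G w).not.1 hc
    rw [dif_neg hc, dif_neg hc', mul_zero]

lemma fcast_extL (Y Y' : SComplex n) (hsub : Y ⊆ Y') {m m' : ℤ} (h : m = m')
    (f : Faces Y m → k) :
    fcast k Y' h (extL k Y Y' hsub m f) = extL k Y Y' hsub m' (fcast k Y h f) := rfl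

/-- removing `v` from a face containing it gives a face of the link -/
def eraseFace (Y : SComplex n) (m m' : ℤ) (hm : m = m' + 1) (F : Faces Y m) (hvF : v ∈ F.1) :
    Faces (linkC {v} Y) m' := by
  refine ⟨F.1.erase v, ⟨?_, ?_⟩, ?_⟩
  · rw [← Finset.insert_eq, Finset.insert_erase hvF]
    exact F.2.1
  · exact Finset.singleton_inter_of_notMem (Finset.notMem_erase _ _)
  · rw [Finset.card_erase_of_mem hvF]
    have h2 := F.2.2
    have h1 : 1 ≤ F.1.card := Finset.card_pos.2 ⟨v, hvF⟩
    push_cast [Nat.cast_sub h1] at h2 ⊢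
    omega

open CategoryTheory in
noncomputable def iotaHom (hX : IsSComplex X) :
    Cplx k (restC X b) (isSComplex_restC X hX b) 1 ⟶
      Cplx k (restC X (insert v b)) (isSComplex_restC X hX (insert v b)) 1 where
  f i := ModuleCat.ofHom (extL k _ _ (Xb_subset X b v) (i + 1))
  comm' i j hij := by
    have hij' : j + 1 = i := hij
    subst hij'
    rw [Cplx_d k _ _ 1 (j+1) j rfl, Cplx_d k _ _ 1 (j+1) j rfl]
    apply ModuleCat.hom_ext
    apply LinearMap.ext
    intro f
    funext G
    show chainBd k (restC X (insert v b)) (j + 1)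
        (fcast k _ (show j+1+1 = (j+1)+1 by omega) (extL k _ _ (Xb_subset X b v) (j+1+1) f)) G
      = extL k _ _ (Xb_subset X b v) (j+1)
          (chainBd k (restC X b) (j+1) (fcast k _ (show j+1+1 = (j+1)+1 by omega) f)) G
    erw [fcast_extL]
    exact extL_comm k X b v hX (j+1) _ G

open CategoryTheory in
noncomputable def sigmaHom (hX : IsSComplex X) :
    Cplx k (restC X (insert v b)) (isSComplex_restC X hX (insert v b)) 1 ⟶
      Cplx k (linkC {v} (restC X (insert v b)))
        (isSComplex_linkC _ (isSComplex_restC X hX (insert v b)) _) 0 where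
  f i := ModuleCat.ofHom (sigmaL k v (restC X (insert v b)) (i + 1) (i + 0) (by omega))
  comm' i j hij := by
    have hij' : j + 1 = i := hij
    subst hij'
    rw [Cplx_d k _ _ 0 (j+1) j rfl, Cplx_d k _ _ 1 (j+1) j rfl]
    apply ModuleCat.hom_ext
    apply LinearMap.ext
    intro f
    funext G
    exact sigma_comm k v (restC X (insert v b)) j (by omega) (by omega) (by omega) (by omega) f G

lemma iota_injective (m : ℤ) :
    Function.Injective (extL k _ _ (Xb_subset X b v) m) := by
  intro f f' h
  funext F
  have h2 := congrFun h ⟨F.1, Xb_subset X b v F.2.1, F.2.2⟩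
  rw [extL_pos k (restC X b) (restC X (insert v b)) (Xb_subset X b v) m f
      ⟨F.1, Xb_subset X b v F.2.1, F.2.2⟩ F.2.1,
    extL_pos k (restC X b) (restC X (insert v b)) (Xb_subset X b v) m f'
      ⟨F.1, Xb_subset X b v F.2.1, F.2.2⟩ F.2.1] at h2
  exact h2

lemma sigma_surjective (m m' : ℤ) (hm : m = m' + 1) (Y : SComplex n) :
    Function.Surjective (sigmaL k v Y m m' hm) := by
  intro g
  classical
  refine ⟨fun F => if h : v ∈ F.1 then
    (-1:k)^((F.1.erase v).card + ((F.1.erase v).filter (· < v)).card) *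
      g (eraseFace v Y m m' hm F h) else 0, ?_⟩
  funext G
  rw [sigmaL_apply]
  have hvG : v ∉ G.1 := link_vnotmem v G
  rw [dif_pos (Finset.mem_insert_self v G.1)]
  have he : (insert v G.1).erase v = G.1 := Finset.erase_insert hvG
  rw [show eraseFace v Y m m' hm ⟨insert v G.1, link_vmem v G, link_card v hm G⟩
      (Finset.mem_insert_self v G.1) = G from Subtype.ext he]
  rw [he, ← mul_assoc, ← pow_add]
  rw [Even.neg_one_pow (Even.add_self _), one_mul]

lemma sigma_ker (hX : IsSComplex X) (hv : v ∉ b) (m m' : ℤ) (hm : m = m' + 1)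
    (x : Faces (restC X (insert v b)) m → k)
    (hx : sigmaL k v (restC X (insert v b)) m m' hm x = 0) :
    ∃ y, extL k _ _ (Xb_subset X b v) m y = x := by
  classical
  have hzero : ∀ F : Faces (restC X (insert v b)) m, v ∈ F.1 → x F = 0 := by
    intro F hvF
    have h1 := congrFun hx (eraseFace v _ m m' hm F hvF)
    rw [sigmaL_apply] at h1
    simp only [Pi.zero_apply] at h1
    have h2 : (⟨insert v (eraseFace v _ m m' hm F hvF).1,
        link_vmem v (eraseFace v _ m m' hm F hvF),
        link_card v hm (eraseFace v _ m m' hm F hvF)⟩ :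
        Faces (restC X (insert v b)) m) = F := Subtype.ext (Finset.insert_erase hvF)
    rw [h2] at h1
    rcases mul_eq_zero.1 h1 with h | h
    · exact absurd h (pow_ne_zero _ (neg_ne_zero.2 one_ne_zero))
    · exact h
  refine ⟨fun F => x ⟨F.1, Xb_subset X b v F.2.1, F.2.2⟩, ?_⟩
  funext F
  by_cases h : F.1 ∈ restC X b
  · rw [extL_pos k _ _ _ _ _ _ h]
    rfl
  · rw [extL_neg k _ _ _ _ _ _ h]
    refine (hzero F ?_).symm
    by_contra hvF
    exact h (mem_Xb_of_not_v X b v F.2.1 hvF)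

lemma sigma_extL_zero (hv : v ∉ b) (m m' : ℤ) (hm : m = m' + 1)
    (y : Faces (restC X b) m → k) :
    sigmaL k v (restC X (insert v b)) m m' hm (extL k _ _ (Xb_subset X b v) m y) = 0 := by
  funext G
  rw [sigmaL_apply]
  erw [extL_neg k _ _ _ _ _ _ (not_mem_Xb_of_v X b v hv (Finset.mem_insert_self _ _))]
  rw [mul_zero]
  rfl

end Pair

open CategoryTheory in
lemma exact_conj {M₁ M₂ M₃ : ModuleCat k} (f : M₁ ⟶ M₂) (g : M₂ ⟶ M₃) (w : f ≫ g = 0)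
    (hex : (ShortComplex.mk f g w).Exact)
    {N₁ N₂ N₃ : Type} [AddCommGroup N₁] [Module k N₁] [AddCommGroup N₂] [Module k N₂]
    [AddCommGroup N₃] [Module k N₃]
    (e₁ : M₁ ≃ₗ[k] N₁) (e₂ : M₂ ≃ₗ[k] N₂) (e₃ : M₃ ≃ₗ[k] N₃) :
    Function.Exact (e₂.toLinearMap ∘ₗ f.hom ∘ₗ e₁.symm.toLinearMap)
      (e₃.toLinearMap ∘ₗ g.hom ∘ₗ e₂.symm.toLinearMap) := by
  rw [ShortComplex.moduleCat_exact_iff] at hex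
  intro y
  constructor
  · intro hy
    have h0 : g (e₂.symm y) = 0 := by
      have h1 : e₃.symm (e₃ (g (e₂.symm y))) = e₃.symm 0 := congrArg e₃.symm hy
      simpa using h1
    obtain ⟨x, hx⟩ := hex _ h0
    refine ⟨e₁ x, ?_⟩
    show e₂ (f (e₁.symm (e₁ x))) = y
    rw [LinearEquiv.symm_apply_apply, hx, LinearEquiv.apply_symm_apply]
  · rintro ⟨z, rfl⟩
    show e₃ (g (e₂.symm (e₂ (f (e₁.symm z))))) = 0
    rw [LinearEquiv.symm_apply_apply]
    have h2 : g (f (e₁.symm z)) = 0 := congrArg (fun φ : M₁ ⟶ M₃ => φ.hom (e₁.symm z)) w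
    rw [h2, map_zero]

end LesAux


open LesAux CategoryTheory in
/-- for `b ∈ {0,1}^n` and a vertex `v ∉ supp b`, there is a long
exact sequence
`⋯ → H̃_i(X_b) → H̃_i(X_{b+v}) → H̃_{i-1}(lk(v, X_{b+v})) → H̃_{i-1}(X_b) → ⋯`,
the homology long exact sequence of the pair `(X_{b+v}, X_b)`. -/
theorem les_of_pair {n : ℕ} (k : Type) [Field k] (X : SComplex n)
    (hX : IsSComplex X) (b : Finset (Fin n)) (v : Fin n) (hv : v ∉ b) :
    ∃ (f : ∀ i : ℤ, hredMod k (restC X b) i →ₗ[k] hredMod k (restC X (insert v b)) i)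
      (g : ∀ i : ℤ, hredMod k (restC X (insert v b)) i →ₗ[k]
        hredMod k (linkC {v} (restC X (insert v b))) (i - 1))
      (h : ∀ i : ℤ, hredMod k (linkC {v} (restC X (insert v b))) (i - 1) →ₗ[k]
        hredMod k (restC X b) (i - 1)),
      (∀ i : ℤ, Function.Exact (f i) (g i)) ∧
        (∀ i : ℤ, Function.Exact (g i) (h i)) ∧
          (∀ i : ℤ, Function.Exact (h i) (f (i - 1))) := by
  classical
  have hXb := isSComplex_restC X hX b
  have hXv := isSComplex_restC X hX (insert v b)
  have hL := isSComplex_linkC (restC X (insert v b)) hXv {v}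
  set Kb := Cplx k (restC X b) (isSComplex_restC X hX b) 1 with hKb
  set Kv := Cplx k (restC X (insert v b)) (isSComplex_restC X hX (insert v b)) 1 with hKv
  set KL := Cplx k (linkC {v} (restC X (insert v b)))
    (isSComplex_linkC _ (isSComplex_restC X hX (insert v b)) _) 0 with hKL
  have hw : iotaHom k X b v hX ≫ sigmaHom k X b v hX = 0 := by
    apply HomologicalComplex.hom_ext
    intro i
    rw [HomologicalComplex.comp_f, HomologicalComplex.zero_f]
    apply ModuleCat.hom_ext
    apply LinearMap.ext
    intro y
    exact sigma_extL_zero k X b v hv (i+1) (i+0) (by omega) y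
  set Sses : ShortComplex (HomologicalComplex (ModuleCat k) (ComplexShape.down ℤ)) :=
    ShortComplex.mk (iotaHom k X b v hX) (sigmaHom k X b v hX) hw with hSses
  have hses : Sses.ShortExact := by
    apply HomologicalComplex.shortExact_of_degreewise_shortExact
    intro i
    refine { exact := ?_, mono_f := ?_, epi_g := ?_ }
    · rw [ShortComplex.moduleCat_exact_iff]
      intro x hx
      obtain ⟨y, hy⟩ := sigma_ker k X b v hX hv (i+1) (i+0) (by omega) x hx
      exact ⟨y, hy⟩
    · exact (ModuleCat.mono_iff_injective _).2 (iota_injective k X b v (i+1))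
    · exact (ModuleCat.epi_iff_surjective _).2
        (sigma_surjective k v (i+1) (i+0) (by omega) (restC X (insert v b)))
  have hrel : ∀ i : ℤ, (ComplexShape.down ℤ).Rel i (i-1) := fun i => by
    simp [ComplexShape.down]
  set eb : ∀ i : ℤ, ((Kb.homology i : Type) ≃ₗ[k] hredMod k (restC X b) i) :=
    fun i => homologyEquiv k (restC X b) _ 1 i i (by omega) with heb
  set ev : ∀ i : ℤ, ((Kv.homology i : Type) ≃ₗ[k] hredMod k (restC X (insert v b)) i) :=
    fun i => homologyEquiv k (restC X (insert v b)) _ 1 i i (by omega) with hev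
  set eL : ∀ i : ℤ, ((KL.homology i : Type) ≃ₗ[k]
      hredMod k (linkC {v} (restC X (insert v b))) (i-1)) :=
    fun i => homologyEquiv k (linkC {v} (restC X (insert v b))) _ 0 i (i-1) (by omega) with heL
  refine ⟨fun i => (ev i).toLinearMap ∘ₗ
      (HomologicalComplex.homologyMap (iotaHom k X b v hX) i |>.hom)
        ∘ₗ (eb i).symm.toLinearMap,
    fun i => (eL i).toLinearMap ∘ₗ
      (HomologicalComplex.homologyMap (sigmaHom k X b v hX) i |>.hom)
        ∘ₗ (ev i).symm.toLinearMap,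
    fun i => (eb (i-1)).toLinearMap ∘ₗ
      (hses.δ i (i-1) (hrel i) |>.hom)
        ∘ₗ (eL i).symm.toLinearMap, ?_, ?_, ?_⟩
  · intro i
    exact exact_conj k _ _ _ (hses.homology_exact₂ i) (eb i) (ev i) (eL i)
  · intro i
    exact exact_conj k _ _ _ (hses.homology_exact₃ i (i-1) (hrel i)) (ev i) (eL i) (eb (i-1))
  · intro i
    exact exact_conj k _ _ _ (hses.homology_exact₁ i (i-1) (hrel i)) (eL i) (eb (i-1)) (ev (i-1))
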